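/- Suppose φ : (0,∞) → ℝ is smooth and satisfies [H_ν + (λ + Λ₀)(λ + Λ)]φ = 0 where H_ν f = −f'' − f'/ρ + cos(2Q(ρ/ν)) f/ρ², Λ₀f = Λf = ρf', Q(y) = 2arctan y, and λ, ν are parameters with ν > 0. Then for any smooth ε : (0,∞) → ℝ with ε, ε' bounded and integrable against the weight, ∫₀^1 ([H_ν + (λ+Λ₀)(λ+Λ)]ε)(ρ) · (1−ρ²)^{λ−1/2} φ(ρ) ρ dρ = ∫₀^1 ε(ρ) · (1−ρ²)^{λ−1/2} ([H_ν + (λ+Λ₀)(λ+Λ)]φ)(ρ) ρ dρ = 0, i.e. the operator is formally self-adjoint with respect to the measure (1−ρ²)^{λ−1/2} ρ dρ on (0,1). -/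

import Mathlib

open Real

/-- The operator `L = H_ν + (λ+Λ₀)(λ+Λ)` acting on functions of `ρ`, where
`H_ν u = −u'' − u'/ρ + cos(2·2arctan(ρ/ν)) u/ρ²` and
`(λ+Λ₀)(λ+Λ)u = (ρ∂_ρ + λ+1)(ρ∂_ρ + λ)u`. -/
noncomputable def Lop (ν lam : ℝ) (u : ℝ → ℝ) (ρ : ℝ) : ℝ :=
  -(deriv (deriv u) ρ) - deriv u ρ / ρ
    + Real.cos (2 * (2 * Real.arctan (ρ / ν))) * u ρ / ρ ^ 2
    + (ρ * deriv (fun t => t * deriv u t + lam * u t) ρ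
        + (lam + 1) * (ρ * deriv u ρ + lam * u ρ))

/-- The flux `F(ρ) = ρ (1−ρ²)^{λ+1/2} (ε'φ − φ'ε)`. -/
noncomputable def Ffun (lam : ℝ) (φ ε : ℝ → ℝ) (ρ : ℝ) : ℝ :=
  ρ * (1 - ρ ^ 2) ^ (lam + 1 / 2) * (deriv ε ρ * φ ρ - deriv φ ρ * ε ρ)

/-- The derivative of the flux. -/
noncomputable def Gfun (lam : ℝ) (φ ε : ℝ → ℝ) (ρ : ℝ) : ℝ :=
  (1 - ρ ^ 2) ^ (lam + 1 / 2) * (deriv ε ρ * φ ρ - deriv φ ρ * ε ρ)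
    + (lam + 1 / 2) * (1 - ρ ^ 2) ^ (lam - 1 / 2) * (-(2 * ρ)) * ρ
        * (deriv ε ρ * φ ρ - deriv φ ρ * ε ρ)
    + ρ * (1 - ρ ^ 2) ^ (lam + 1 / 2)
        * (deriv (deriv ε) ρ * φ ρ - deriv (deriv φ) ρ * ε ρ)

lemma deriv_aux (u : ℝ → ℝ) (hu : ContDiff ℝ (⊤ : ℕ∞) u) (lam ρ : ℝ) :
    deriv (fun t => t * deriv u t + lam * u t) ρ
      = deriv u ρ + ρ * deriv (deriv u) ρ + lam * deriv u ρ := by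
  have hu1 : ContDiff ℝ (⊤ : ℕ∞) (deriv u) := (contDiff_infty_iff_deriv.mp hu).2
  have h0 : HasDerivAt u (deriv u ρ) ρ := (hu.differentiable (by simp) ρ).hasDerivAt
  have h1 : HasDerivAt (deriv u) (deriv (deriv u) ρ) ρ :=
    (hu1.differentiable (by simp) ρ).hasDerivAt
  have h2 : HasDerivAt (fun t => t * deriv u t + lam * u t)
      (1 * deriv u ρ + ρ * deriv (deriv u) ρ + lam * deriv u ρ) ρ :=
    ((hasDerivAt_id ρ).mul h1).add (h0.const_mul lam)
  rw [h2.deriv]; ring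

lemma key (ν lam : ℝ) (φ ε : ℝ → ℝ) (hφ : ContDiff ℝ (⊤ : ℕ∞) φ) (hε : ContDiff ℝ (⊤ : ℕ∞) ε)
    {ρ : ℝ} (hρ : 0 < ρ) (hρ1 : ρ < 1) :
    Lop ν lam ε ρ * (1 - ρ ^ 2) ^ (lam - 1 / 2) * φ ρ * ρ
      - ε ρ * (1 - ρ ^ 2) ^ (lam - 1 / 2) * Lop ν lam φ ρ * ρ
      = -(Gfun lam φ ε ρ) := by
  have hb : (0 : ℝ) < 1 - ρ ^ 2 := by nlinarith
  have hsplit : (1 - ρ ^ 2) ^ (lam + 1 / 2)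
      = (1 - ρ ^ 2) * (1 - ρ ^ 2) ^ (lam - 1 / 2) := by
    rw [show lam + 1 / 2 = 1 + (lam - 1 / 2) by ring, Real.rpow_add hb, Real.rpow_one]
  simp only [Lop, Gfun, deriv_aux ε hε, deriv_aux φ hφ, hsplit]
  field_simp
  ring

lemma hasDeriv_F (lam : ℝ) (φ ε : ℝ → ℝ) (hφ : ContDiff ℝ (⊤ : ℕ∞) φ) (hε : ContDiff ℝ (⊤ : ℕ∞) ε)
    {ρ : ℝ} (hb : 1 - ρ ^ 2 ≠ 0) :
    HasDerivAt (Ffun lam φ ε) (Gfun lam φ ε ρ) ρ := by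
  have hφ1 : ContDiff ℝ (⊤ : ℕ∞) (deriv φ) := (contDiff_infty_iff_deriv.mp hφ).2
  have hε1 : ContDiff ℝ (⊤ : ℕ∞) (deriv ε) := (contDiff_infty_iff_deriv.mp hε).2
  have hφd : HasDerivAt φ (deriv φ ρ) ρ := (hφ.differentiable (by simp) ρ).hasDerivAt
  have hεd : HasDerivAt ε (deriv ε ρ) ρ := (hε.differentiable (by simp) ρ).hasDerivAt
  have hφd2 : HasDerivAt (deriv φ) (deriv (deriv φ) ρ) ρ :=
    (hφ1.differentiable (by simp) ρ).hasDerivAt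
  have hεd2 : HasDerivAt (deriv ε) (deriv (deriv ε) ρ) ρ :=
    (hε1.differentiable (by simp) ρ).hasDerivAt
  have hbase : HasDerivAt (fun t : ℝ => 1 - t ^ 2) (-(2 * ρ)) ρ := by
    simpa using ((hasDerivAt_pow 2 ρ).const_sub 1)
  have hr : HasDerivAt (fun t : ℝ => (1 - t ^ 2) ^ (lam + 1 / 2))
      (-(2 * ρ) * (lam + 1 / 2) * (1 - ρ ^ 2) ^ (lam + 1 / 2 - 1)) ρ :=
    hbase.rpow_const (Or.inl hb)
  rw [show lam + 1 / 2 - 1 = lam - 1 / 2 by ring] at hr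
  have hD : HasDerivAt (fun t => deriv ε t * φ t - deriv φ t * ε t)
      (deriv (deriv ε) ρ * φ ρ - deriv (deriv φ) ρ * ε ρ) ρ := by
    have h := (hεd2.mul hφd).sub (hφd2.mul hεd)
    rw [show deriv (deriv ε) ρ * φ ρ - deriv (deriv φ) ρ * ε ρ = deriv (deriv ε) ρ * φ ρ + deriv ε ρ * deriv φ ρ - (deriv (deriv φ) ρ * ε ρ + deriv φ ρ * deriv ε ρ) by ring]
    exact h
  have hmain := ((hasDerivAt_id ρ).mul hr).mul hD
  have hval : Gfun lam φ ε ρ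
      = (1 * (1 - ρ ^ 2) ^ (lam + 1 / 2)
          + ρ * (-(2 * ρ) * (lam + 1 / 2) * (1 - ρ ^ 2) ^ (lam - 1 / 2)))
          * (deriv ε ρ * φ ρ - deriv φ ρ * ε ρ)
        + ρ * (1 - ρ ^ 2) ^ (lam + 1 / 2)
          * (deriv (deriv ε) ρ * φ ρ - deriv (deriv φ) ρ * ε ρ) := by
    simp only [Gfun]; ring
  show HasDerivAt (fun t => t * (1 - t ^ 2) ^ (lam + 1 / 2)
      * (deriv ε t * φ t - deriv φ t * ε t)) (Gfun lam φ ε ρ) ρ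
  rw [hval]
  exact hmain

/-- If `φ` is smooth with `[H_ν + (λ+Λ₀)(λ+Λ)]φ = 0` on `(0,∞)`, then for smooth `ε`
(with `ε(0) = φ(0) = 0`, `λ > 1/2`) the operator is formally self-adjoint with
respect to the measure `(1−ρ²)^{λ−1/2} ρ dρ` on `(0,1)`:
`∫₀¹ (Lε)(ρ) (1−ρ²)^{λ−1/2} φ(ρ) ρ dρ = ∫₀¹ ε(ρ) (1−ρ²)^{λ−1/2} (Lφ)(ρ) ρ dρ = 0`. -/
theorem Lop_formally_self_adjoint (ν lam : ℝ) (hν : 0 < ν) (hlam : 1 / 2 < lam)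
    (φ ε : ℝ → ℝ) (hφ : ContDiff ℝ (⊤ : ℕ∞) φ) (hε : ContDiff ℝ (⊤ : ℕ∞) ε)
    (hφ0 : φ 0 = 0) (hε0 : ε 0 = 0)
    (heq : ∀ ρ : ℝ, 0 < ρ → Lop ν lam φ ρ = 0) :
    (∫ ρ in (0 : ℝ)..1, Lop ν lam ε ρ * (1 - ρ ^ 2) ^ (lam - 1 / 2) * φ ρ * ρ)
      = (∫ ρ in (0 : ℝ)..1, ε ρ * (1 - ρ ^ 2) ^ (lam - 1 / 2) * Lop ν lam φ ρ * ρ) ∧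
    (∫ ρ in (0 : ℝ)..1, Lop ν lam ε ρ * (1 - ρ ^ 2) ^ (lam - 1 / 2) * φ ρ * ρ) = 0 := by
  have hφ' : ContDiff ℝ (⊤ : ℕ∞) φ := hφ.of_le (by simp)
  have hε' : ContDiff ℝ (⊤ : ℕ∞) ε := hε.of_le (by simp)
  have hφ1 : ContDiff ℝ (⊤ : ℕ∞) (deriv φ) := (contDiff_infty_iff_deriv.mp hφ').2
  have hε1 : ContDiff ℝ (⊤ : ℕ∞) (deriv ε) := (contDiff_infty_iff_deriv.mp hε').2
  have hφ2 : ContDiff ℝ (⊤ : ℕ∞) (deriv (deriv φ)) := (contDiff_infty_iff_deriv.mp hφ1).2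
  have hε2 : ContDiff ℝ (⊤ : ℕ∞) (deriv (deriv ε)) := (contDiff_infty_iff_deriv.mp hε1).2
  have hp1 : (0 : ℝ) ≤ lam + 1 / 2 := by linarith
  have hp2 : (0 : ℝ) ≤ lam - 1 / 2 := by linarith
  have cbase : Continuous fun ρ : ℝ => 1 - ρ ^ 2 := by continuity
  have cr1 : Continuous fun ρ : ℝ => (1 - ρ ^ 2) ^ (lam + 1 / 2) :=
    cbase.rpow_const (fun x => Or.inr hp1)
  have cr2 : Continuous fun ρ : ℝ => (1 - ρ ^ 2) ^ (lam - 1 / 2) :=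
    cbase.rpow_const (fun x => Or.inr hp2)
  have cD : Continuous fun ρ => deriv ε ρ * φ ρ - deriv φ ρ * ε ρ :=
    (hε1.continuous.mul hφ.continuous).sub (hφ1.continuous.mul hε.continuous)
  have cD2 : Continuous fun ρ => deriv (deriv ε) ρ * φ ρ - deriv (deriv φ) ρ * ε ρ :=
    (hε2.continuous.mul hφ.continuous).sub (hφ2.continuous.mul hε.continuous)
  have cG : Continuous (Gfun lam φ ε) := by
    unfold Gfun
    exact ((cr1.mul cD).add
        ((((continuous_const.mul cr2).mul (continuous_const.mul continuous_id).neg).mul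
            continuous_id).mul cD)).add ((continuous_id.mul cr1).mul cD2)
  have cF : Continuous (Ffun lam φ ε) := by
    show Continuous fun ρ : ℝ => ρ * (1 - ρ ^ 2) ^ (lam + 1 / 2)
      * (deriv ε ρ * φ ρ - deriv φ ρ * ε ρ)
    exact (continuous_id.mul cr1).mul cD
  -- integral of G via FTC
  have hFTC : (∫ ρ in (0 : ℝ)..1, Gfun lam φ ε ρ)
      = Ffun lam φ ε 1 - Ffun lam φ ε 0 := by
    apply intervalIntegral.integral_eq_sub_of_hasDerivAt_of_le (by norm_num)
      cF.continuousOn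
      (fun x hx => hasDeriv_F lam φ ε hφ' hε' (by nlinarith [hx.1, hx.2]))
      (cG.intervalIntegrable 0 1)
  have z1 : (0:ℝ) ^ (lam - 2⁻¹) = 0 := Real.zero_rpow (ne_of_gt (by linarith))
  have z2 : (0:ℝ) ^ (lam + 2⁻¹) = 0 := Real.zero_rpow (ne_of_gt (by linarith))
  have hF1 : Ffun lam φ ε 1 = 0 := by simp [Ffun, z2]
  have hF0 : Ffun lam φ ε 0 = 0 := by simp [Ffun]
  -- the second integrand vanishes identically on [0,1]
  have hB : (∫ ρ in (0 : ℝ)..1, ε ρ * (1 - ρ ^ 2) ^ (lam - 1 / 2) * Lop ν lam φ ρ * ρ)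
      = 0 := by
    have hEq : Set.EqOn
        (fun ρ => ε ρ * (1 - ρ ^ 2) ^ (lam - 1 / 2) * Lop ν lam φ ρ * ρ)
        (fun _ => (0 : ℝ)) (Set.uIcc (0 : ℝ) 1) := by
      intro ρ hρ
      rw [Set.uIcc_of_le (by norm_num : (0:ℝ) ≤ 1)] at hρ
      rcases hρ.1.eq_or_lt with h | h
      · simp [← h, hε0]
      · simp [heq ρ h]
    rw [intervalIntegral.integral_congr hEq]
    simp
  -- first integrand equals -G on [0,1]
  have hAeq : Set.EqOn
      (fun ρ => Lop ν lam ε ρ * (1 - ρ ^ 2) ^ (lam - 1 / 2) * φ ρ * ρ)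
      (fun ρ => -(Gfun lam φ ε ρ)) (Set.uIcc (0 : ℝ) 1) := by
    intro ρ hρ
    rw [Set.uIcc_of_le (by norm_num : (0:ℝ) ≤ 1)] at hρ
    rcases hρ.1.eq_or_lt with h | h
    · subst h
      simp [Gfun, hφ0, hε0]
    · rcases hρ.2.lt_or_eq with h1 | h1
      · have hk := key ν lam φ ε hφ' hε' h h1
        rw [heq ρ h] at hk
        simpa using hk
      · subst h1
        simp [Gfun, z1, z2]
  have hA : (∫ ρ in (0 : ℝ)..1, Lop ν lam ε ρ * (1 - ρ ^ 2) ^ (lam - 1 / 2) * φ ρ * ρ)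
      = 0 := by
    rw [intervalIntegral.integral_congr hAeq, intervalIntegral.integral_neg, hFTC,
      hF1, hF0]
    ring
  exact ⟨hA.trans hB.symm, hA⟩
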